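/- arXiv:1506.02018 — 8 statements merged into one kernel-verified Lean document; each statement's English description precedes it below -/
import Mathlib

section
/- Let N ≥ 2 be a natural number and let z_1, ..., z_{N+1} be distinct nonzero complex numbers such that for every i, 2·∑_{j≠i} z_i/(z_i − z_j) = N. Then there exists a nonzero complex number ξ_0 such that z_j^{N+1} = ξ_0 for all j = 1, ..., N+1; in fact ξ_0 = (−1)^N z_1·…·z_{N+1}. -/
open Polynomial Finset

lemma derivative_finset_prod {ι : Type*} [DecidableEq ι] (s : Finset ι) (f : ι → ℂ[X]) :
    derivative (∏ j ∈ s, f j) = ∑ i ∈ s, (∏ j ∈ s.erase i, f j) * derivative (f i) := by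
  rw [Finset.prod, Polynomial.derivative_prod, Finset.sum]
  congr 1

/-- blow-up points satisfying the vertex condition form the
(N+1)-th roots of a nonzero complex number ξ₀ = (-1)^N z₁⋯z_{N+1}. -/
theorem stmt0 (N : ℕ) (hN : 2 ≤ N) (z : Fin (N + 1) → ℂ)
    (hz : ∀ j, z j ≠ 0) (hinj : Function.Injective z)
    (h : ∀ i, 2 * ∑ j ∈ Finset.univ.erase i, z i / (z i - z j) = (N : ℂ)) :
    ∃ ξ₀ : ℂ, ξ₀ ≠ 0 ∧ ξ₀ = (-1) ^ N * ∏ j, z j ∧ ∀ j, z j ^ (N + 1) = ξ₀ := by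
  classical
  set P : ℂ[X] := ∏ j, (X - C (z j)) with hPdef
  have hsub : ∀ i j : Fin (N + 1), i ≠ j → z i - z j ≠ 0 := fun i j hij =>
    sub_ne_zero.mpr fun hzz => hij (hinj hzz)
  -- first derivative
  have hP1 : derivative P = ∑ i, ∏ j ∈ univ.erase i, (X - C (z j)) := by
    rw [hPdef, derivative_finset_prod]
    simp
  -- second derivative
  have hP2 : derivative (derivative P) =
      ∑ i, ∑ k ∈ univ.erase i, ∏ j ∈ (univ.erase i).erase k, (X - C (z j)) := by
    rw [hP1, derivative_sum]
    refine Finset.sum_congr rfl fun i _ => ?_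
    rw [derivative_finset_prod]
    simp
  -- evaluations
  have evalP1 : ∀ i, eval (z i) (derivative P) = ∏ j ∈ univ.erase i, (z i - z j) := by
    intro i
    rw [hP1, eval_finset_sum]
    rw [Finset.sum_eq_single i]
    · simp [eval_prod]
    · intro b _ hb
      rw [eval_prod]
      refine Finset.prod_eq_zero (Finset.mem_erase.mpr ⟨fun hc => hb hc.symm, mem_univ i⟩) ?_
      simp
    · simp
  have evalP2 : ∀ i, eval (z i) (derivative (derivative P)) =
      2 * ∑ j ∈ univ.erase i, ∏ k ∈ (univ.erase i).erase j, (z i - z k) := by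
    intro i
    rw [hP2, eval_finset_sum]
    have hinner : ∀ i', eval (z i) (∑ k ∈ univ.erase i', ∏ j ∈ (univ.erase i').erase k,
        (X - C (z j))) = ∑ k ∈ univ.erase i', ∏ j ∈ (univ.erase i').erase k, (z i - z j) := by
      intro i'
      rw [eval_finset_sum]
      exact Finset.sum_congr rfl fun k _ => by simp [eval_prod]
    rw [← Finset.sum_erase_add _ _ (mem_univ i)]
    have h1 : ∀ i' ∈ univ.erase i,
        eval (z i) (∑ k ∈ univ.erase i', ∏ j ∈ (univ.erase i').erase k, (X - C (z j)))
          = ∏ k ∈ (univ.erase i).erase i', (z i - z k) := by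
      intro i' hi'
      rw [hinner]
      have hii' : i ≠ i' := fun hc => (Finset.mem_erase.mp hi').1 hc.symm
      rw [Finset.sum_eq_single i]
      · rw [Finset.erase_right_comm]
      · intro b hb hbi
        refine Finset.prod_eq_zero (Finset.mem_erase.mpr ⟨fun hc => hbi hc.symm,
          Finset.mem_erase.mpr ⟨hii', mem_univ i⟩⟩) ?_
        simp
      · intro hc
        exact absurd (Finset.mem_erase.mpr ⟨hii', mem_univ i⟩) hc
    rw [Finset.sum_congr rfl h1, hinner i]
    ring
  -- the key polynomial identity at each z i
  have hkey : ∀ i, eval (z i) (X * derivative (derivative P) - C (N : ℂ) * derivative P) = 0 := by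
    intro i
    set D := ∏ j ∈ univ.erase i, (z i - z j) with hD
    have hDne : D ≠ 0 := Finset.prod_ne_zero_iff.mpr fun j hj =>
      hsub i j fun hc => (Finset.mem_erase.mp hj).1 hc.symm
    have hsplit : ∀ j ∈ univ.erase i,
        (z i - z j) * ∏ k ∈ (univ.erase i).erase j, (z i - z k) = D :=
      fun j hj => Finset.mul_prod_erase (univ.erase i) (fun k => z i - z k) hj
    have expand : ∀ j ∈ univ.erase i,
        z i / (z i - z j) = (z i * ∏ k ∈ (univ.erase i).erase j, (z i - z k)) / D := by
      intro j hj
      have hne : z i - z j ≠ 0 := hsub i j fun hc => (Finset.mem_erase.mp hj).1 hc.symm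
      have hrne : (∏ k ∈ (univ.erase i).erase j, (z i - z k)) ≠ 0 :=
        Finset.prod_ne_zero_iff.mpr fun k hk => hsub i k fun hc =>
          (Finset.mem_erase.mp (Finset.mem_of_mem_erase hk)).1 hc.symm
      rw [← hsplit j hj, div_eq_div_iff hne (mul_ne_zero hne hrne)]
      ring
    have h' := h i
    rw [Finset.sum_congr rfl expand] at h'
    have hsum : ∑ j ∈ univ.erase i, (z i * ∏ k ∈ (univ.erase i).erase j, (z i - z k)) / D
        = (z i * ∑ j ∈ univ.erase i, ∏ k ∈ (univ.erase i).erase j, (z i - z k)) / D := by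
      rw [Finset.mul_sum, Finset.sum_div]
    rw [hsum] at h'
    have h'' : 2 * (z i * ∑ j ∈ univ.erase i, ∏ k ∈ (univ.erase i).erase j, (z i - z k))
        = (N : ℂ) * D := by
      rw [mul_div_assoc'] at h'
      rw [div_eq_iff hDne] at h'
      linear_combination h'
    simp only [eval_sub, eval_mul, eval_X, eval_C, evalP1, evalP2]
    rw [← hD]
    linear_combination h''
  -- degree bound and vanishing
  have hPmonic : P.Monic := monic_prod_of_monic _ _ fun j _ => monic_X_sub_C (z j)
  have hPdeg : P.natDegree = N + 1 := by
    rw [hPdef, natDegree_prod _ _ fun j _ => X_sub_C_ne_zero (z j)]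
    simp
  have hQ : X * derivative (derivative P) - C (N : ℂ) * derivative P = 0 := by
    refine Polynomial.eq_zero_of_natDegree_lt_card_of_eval_eq_zero _ hinj hkey ?_
    rw [Fintype.card_fin]
    have hd1 : (derivative P).natDegree ≤ N := by
      have := natDegree_derivative_le P
      omega
    have hd2 : (derivative (derivative P)).natDegree ≤ N - 1 := by
      have := natDegree_derivative_le (derivative P)
      omega
    have hX : (X * derivative (derivative P)).natDegree ≤ N := by
      refine le_trans (natDegree_mul_le) ?_
      rw [natDegree_X]
      omega
    have hC : (C (N : ℂ) * derivative P).natDegree ≤ N := by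
      refine le_trans (natDegree_mul_le) ?_
      rw [natDegree_C]
      omega
    have := natDegree_sub_le (X * derivative (derivative P)) (C (N : ℂ) * derivative P)
    omega
  -- deduce derivative P = C (N+1) * X^N
  have hcoeffP : P.coeff (N + 1) = 1 := by
    have := hPmonic
    rw [Monic, leadingCoeff, hPdeg] at this
    exact this
  have hRN : (derivative P).coeff N = (N : ℂ) + 1 := by
    rw [coeff_derivative, hcoeffP]
    ring
  have hRcoeff : ∀ k, k ≠ N → (derivative P).coeff k = 0 := by
    intro k hk
    have heq : ∀ m, (X * derivative (derivative P)).coeff m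
        = ((C (N : ℂ)) * derivative P).coeff m := by
      intro m
      rw [sub_eq_zero] at hQ
      rw [hQ]
    rcases Nat.eq_zero_or_pos k with rfl | hkpos
    · have h0 := heq 0
      rw [coeff_C_mul] at h0
      have hX0 : (X * derivative (derivative P)).coeff 0 = 0 := by
        rw [mul_coeff_zero, coeff_X_zero, zero_mul]
      rw [hX0] at h0
      have hNne : (N : ℂ) ≠ 0 := Nat.cast_ne_zero.mpr (by omega)
      exact (mul_eq_zero.mp h0.symm).resolve_left hNne
    · obtain ⟨m, rfl⟩ : ∃ m, k = m + 1 := ⟨k - 1, by omega⟩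
      have h1 := heq (m + 1)
      rw [coeff_X_mul, coeff_derivative, coeff_C_mul] at h1
      have hcne : ((m : ℂ) + 1) ≠ (N : ℂ) := by
        intro hc
        apply hk
        have : ((m + 1 : ℕ) : ℂ) = (N : ℂ) := by push_cast; linear_combination hc
        exact_mod_cast this
      have : (derivative P).coeff (m + 1) * ((m : ℂ) + 1 - N) = 0 := by
        linear_combination h1
      rcases mul_eq_zero.mp this with h2 | h2
      · exact h2
      · exact absurd (by linear_combination h2) hcne
  have hR : derivative P = C ((N : ℂ) + 1) * X ^ N := by
    ext k
    rw [coeff_C_mul, coeff_X_pow]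
    by_cases hk : k = N
    · subst hk; simp [hRN]
    · simp [hk, hRcoeff k hk]
  -- P = X^(N+1) + C c
  have hder0 : derivative (P - X ^ (N + 1)) = 0 := by
    rw [derivative_sub, derivative_X_pow, hR]
    push_cast
    ring
  have hPc : P = X ^ (N + 1) + C (P.coeff 0) := by
    have := eq_C_of_derivative_eq_zero hder0
    have hc0 : (P - X ^ (N + 1)).coeff 0 = P.coeff 0 := by
      rw [coeff_sub, coeff_X_pow]
      simp
    rw [hc0] at this
    linear_combination (norm := ring_nf) this
  have hc0val : P.coeff 0 = (-1) ^ (N + 1) * ∏ j, z j := by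
    rw [coeff_zero_eq_eval_zero, hPdef, eval_prod]
    have he : ∀ j : Fin (N + 1), eval 0 (X - C (z j)) = -1 * z j := by
      intro j
      rw [eval_sub, eval_X, eval_C, zero_sub, neg_one_mul]
    rw [Finset.prod_congr rfl fun j _ => he j, Finset.prod_mul_distrib, Finset.prod_const,
      Finset.card_univ, Fintype.card_fin]
  refine ⟨(-1) ^ N * ∏ j, z j, ?_, rfl, ?_⟩
  · exact mul_ne_zero (pow_ne_zero _ (by norm_num)) (Finset.prod_ne_zero_iff.mpr fun j _ => hz j)
  · intro j
    have hroot : eval (z j) P = 0 := by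
      rw [hPdef, eval_prod]
      exact Finset.prod_eq_zero (mem_univ j) (by simp)
    rw [hPc] at hroot
    simp only [eval_add, eval_pow, eval_X, eval_C] at hroot
    rw [hc0val] at hroot
    have : (-1 : ℂ) ^ (N + 1) = -(-1) ^ N := by ring
    rw [this] at hroot
    linear_combination hroot
end

section
/- Let N ≥ 2 and let P(z) = ∏_{j=1}^{N+1}(z − z_j) be a monic polynomial of degree N+1 with N+1 distinct roots z_1,...,z_{N+1}. If N·P'(z_i) = z_i·P''(z_i) for every i = 1,...,N+1, then P(z) = z^{N+1} + a_0 for some constant a_0. -/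
open Polynomial

/-- if N·P' (z_i) = z_i·P''(z_i) at every root z_i of the monic
polynomial P of degree N+1 with distinct roots, then P(z) = z^{N+1} + a₀. -/
theorem stmt1 (N : ℕ) (hN : 2 ≤ N) (z : Fin (N + 1) → ℂ) (hinj : Function.Injective z)
    (P : ℂ[X]) (hP : P = ∏ j, (X - C (z j)))
    (h : ∀ i, (N : ℂ) * (Polynomial.derivative P).eval (z i)
        = z i * (Polynomial.derivative (Polynomial.derivative P)).eval (z i)) :
    ∃ a₀ : ℂ, P = X ^ (N + 1) + C a₀ := by
  have hPmonic : P.Monic := by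
    rw [hP]; exact monic_prod_of_monic _ _ (fun j _ => monic_X_sub_C (z j))
  have hPdeg : P.natDegree = N + 1 := by
    rw [hP, natDegree_prod _ _ (fun j _ => X_sub_C_ne_zero (z j))]
    simp [natDegree_X_sub_C]
  set Q : ℂ[X] := C (N : ℂ) * derivative P - X * derivative (derivative P) with hQ
  have hQdeg : Q.natDegree ≤ N := by
    have h1 : (derivative P).natDegree ≤ N := by
      have := natDegree_derivative_le P; rw [hPdeg] at this; omega
    have h2 : (X * derivative (derivative P)).natDegree ≤ N := by
      apply (natDegree_mul_le).trans
      have := natDegree_derivative_le (derivative P)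
      have : (derivative (derivative P)).natDegree ≤ N - 1 := by
        have h3 := natDegree_derivative_le (derivative P)
        omega
      simp only [natDegree_X]
      omega
    apply (natDegree_sub_le _ _).trans
    apply max_le _ h2
    exact (natDegree_C_mul_le _ _).trans h1
  have hQ0 : Q = 0 := by
    apply eq_zero_of_natDegree_lt_card_of_eval_eq_zero Q hinj
    · intro i
      simp only [hQ, eval_sub, eval_mul, eval_C, eval_X]
      rw [h i]; ring
    · simpa using Nat.lt_succ_of_le hQdeg
  have hcoeff : ∀ k, 1 ≤ k → k ≤ N → P.coeff k = 0 := by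
    intro k hk1 hkN
    have hc : Q.coeff (k - 1) = 0 := by rw [hQ0]; simp
    rcases Nat.exists_eq_add_of_le hk1 with ⟨m, rfl⟩
    simp only [hQ, coeff_sub, coeff_C_mul, Nat.add_sub_cancel_left] at hc
    have hk' : 1 + m = m + 1 := by omega
    rw [hk']
    rcases m with _ | j
    · simp only [coeff_derivative, mul_coeff_zero, coeff_X_zero, zero_mul, sub_zero,
        Nat.cast_zero, zero_add, mul_one] at hc
      have hNne : (N : ℂ) ≠ 0 := Nat.cast_ne_zero.mpr (by omega)
      exact (mul_eq_zero.mp hc).resolve_left hNne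
    · rw [coeff_X_mul] at hc; simp only [coeff_derivative] at hc
      have key : P.coeff (j + 2) * (((j : ℂ) + 2) * ((N : ℂ) - ((j : ℂ) + 1))) = 0 := by
        push_cast at hc ⊢
        linear_combination hc
      have h2 : ((j : ℂ) + 2) ≠ 0 := by
        have : ((j + 2 : ℕ) : ℂ) ≠ 0 := Nat.cast_ne_zero.mpr (by omega)
        push_cast at this; exact this
      have h3 : ((N : ℂ) - ((j : ℂ) + 1)) ≠ 0 := by
        have hne : N ≠ j + 1 := by omega
        have : ((N : ℕ) : ℂ) ≠ ((j + 1 : ℕ) : ℂ) := by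
          exact_mod_cast hne
        push_cast at this
        exact sub_ne_zero.mpr this
      have := (mul_eq_zero.mp key).resolve_right (mul_ne_zero h2 h3)
      simpa using this
  refine ⟨P.coeff 0, ?_⟩
  ext k
  rcases Nat.lt_trichotomy k (N + 1) with hk | rfl | hk
  · rcases Nat.eq_zero_or_pos k with rfl | hk0
    · simp
    · rw [coeff_add, coeff_X_pow, if_neg (by omega), coeff_C, if_neg (by omega),
        hcoeff k hk0 (by omega)]
      ring
  · rw [coeff_add, coeff_X_pow, if_pos rfl, coeff_C, if_neg (by omega)]
    have := hPmonic.coeff_natDegree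
    rw [hPdeg] at this
    simp [this]
  · rw [coeff_add, coeff_X_pow, if_neg (by omega), coeff_C, if_neg (by omega)]
    have : P.natDegree < k := by omega
    simp [coeff_eq_zero_of_natDegree_lt this]
end

section
/- Let N > −1, a > 0 with a ≠ 1/(N+1). Suppose β satisfies β > max{2/a, 2(N+1)}, β(4−aβ)/(4(1−a(N+1))) > 0, and aβ(β−4(N+1))/(4(1−a(N+1))) > 0. Then min{4/a, 4(N+1)} < β < max{4/a, 4(N+1)}. -/
/-- necessary condition on the total mass β for solvability. -/
theorem stmt4 (N a β : ℝ) (hN : -1 < N) (ha : 0 < a) (ha' : a ≠ 1 / (N + 1))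
    (h1 : β > max (2 / a) (2 * (N + 1)))
    (h2 : β * (4 - a * β) / (4 * (1 - a * (N + 1))) > 0)
    (h3 : a * β * (β - 4 * (N + 1)) / (4 * (1 - a * (N + 1))) > 0) :
    min (4 / a) (4 * (N + 1)) < β ∧ β < max (4 / a) (4 * (N + 1)) := by
  have hN1 : (0:ℝ) < N + 1 := by linarith
  have hβ : 0 < β := lt_trans (by positivity : (0:ℝ) < 2 / a)
    (lt_of_le_of_lt (le_max_left _ _) h1)
  rcases lt_trichotomy (1 - a * (N + 1)) 0 with hneg | hzero | hpos
  · -- denominator negative: β > 4/a, β < 4(N+1)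
    have h4d : 4 * (1 - a * (N + 1)) < 0 := by linarith
    have hn2 : β * (4 - a * β) < 0 := by
      rcases div_pos_iff.mp h2 with ⟨_, h⟩ | ⟨h, _⟩ <;> linarith
    have hn3 : a * β * (β - 4 * (N + 1)) < 0 := by
      rcases div_pos_iff.mp h3 with ⟨_, h⟩ | ⟨h, _⟩ <;> linarith
    have hb1 : 4 / a < β := (div_lt_iff₀ ha).mpr (by nlinarith)
    have hb2 : β < 4 * (N + 1) := by nlinarith
    exact ⟨lt_of_le_of_lt (min_le_left _ _) hb1,
      lt_of_lt_of_le hb2 (le_max_right _ _)⟩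
  · exfalso
    apply ha'
    field_simp
    linarith
  · -- denominator positive: β < 4/a, β > 4(N+1)
    have h4d : 0 < 4 * (1 - a * (N + 1)) := by linarith
    have hn2 : 0 < β * (4 - a * β) := by
      rcases div_pos_iff.mp h2 with ⟨h, _⟩ | ⟨_, h⟩ <;> linarith
    have hn3 : 0 < a * β * (β - 4 * (N + 1)) := by
      rcases div_pos_iff.mp h3 with ⟨h, _⟩ | ⟨_, h⟩ <;> linarith
    have hb1 : β < 4 / a := (lt_div_iff₀ ha).mpr (by nlinarith)
    have hb2 : 4 * (N + 1) < β := by nlinarith [mul_pos ha hβ]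
    exact ⟨lt_of_le_of_lt (min_le_right _ _) hb2,
      lt_of_lt_of_le hb1 (le_max_left _ _)⟩
end

section
/- Let u be a smooth solution of −Δu = e^{au} + |x|^{2N}e^u on ℝ² with a > 0. Define V(x) = |x|^{2N}e^{(1−a)u(x)} and ξ(x) = u(x) + (1/a)log(1+V(x)). Then −Δξ ≤ ((a + V)/(a(1+V))) e^{aξ} pointwise on ℝ² \ {0}. In particular, if 0 < a ≤ 1 then η := e^{aξ} satisfies −Δ log η ≤ η/a, and if a > 1 then η := a·e^{aξ} satisfies −Δ log η ≤ η. -/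
/-- The Laplacian of a function `u : ℂ → ℝ`. -/
noncomputable def lap (u : ℂ → ℝ) (z : ℂ) : ℝ :=
  iteratedFDeriv ℝ 2 u z ![1, 1] + iteratedFDeriv ℝ 2 u z ![Complex.I, Complex.I]

open Complex Filter

noncomputable def dd (c₁ c₂ : ℝ) : ℂ →L[ℝ] ℝ := c₁ • Complex.reCLM + c₂ • Complex.imCLM

lemma dd_apply (c₁ c₂ : ℝ) (v : ℂ) : dd c₁ c₂ v = c₁ * v.re + c₂ * v.im := by
  simp [dd]

lemma dd_smul (c a b : ℝ) : c • dd a b = dd (c*a) (c*b) := by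
  ext v; simp [dd_apply]; ring

lemma dd_add (a b c d : ℝ) : dd a b + dd c d = dd (a+c) (b+d) := by
  ext v; simp [dd_apply]; ring

lemma clm_eq_dd (L : ℂ →L[ℝ] ℝ) : L = dd (L 1) (L Complex.I) := by
  ext v
  have : v = v.re • (1:ℂ) + v.im • Complex.I := by
    simp [Complex.ext_iff]
  rw [dd_apply]
  conv_lhs => rw [this, map_add, map_smul, map_smul]
  simp only [smul_eq_mul]
  ring

lemma lap_formula {f p q : ℂ → ℝ} {x : ℂ}
    (h : ∀ᶠ y in nhds x, HasFDerivAt f (dd (p y) (q y)) y)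
    (hp : DifferentiableAt ℝ p x) (hq : DifferentiableAt ℝ q x) :
    lap f x = fderiv ℝ p x 1 + fderiv ℝ q x Complex.I := by
  have h1 : fderiv ℝ f =ᶠ[nhds x] fun y => dd (p y) (q y) :=
    h.mono fun y hy => hy.fderiv
  have h2 : HasFDerivAt (fun y => dd (p y) (q y))
      ((fderiv ℝ p x).smulRight Complex.reCLM + (fderiv ℝ q x).smulRight Complex.imCLM) x := by
    show HasFDerivAt (fun y => p y • Complex.reCLM + q y • Complex.imCLM) _ x
    exact (hp.hasFDerivAt.smul_const Complex.reCLM).add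
      (hq.hasFDerivAt.smul_const Complex.imCLM)
  have h3 : fderiv ℝ (fderiv ℝ f) x
      = (fderiv ℝ p x).smulRight Complex.reCLM + (fderiv ℝ q x).smulRight Complex.imCLM := by
    rw [h1.fderiv_eq, h2.fderiv]
  simp only [lap, iteratedFDeriv_two_apply, h3]
  simp [Matrix.cons_val_zero, Matrix.cons_val_one]

-- dd-combinators
lemma hd_congr {f : ℂ → ℝ} {x : ℂ} {p q p' q' : ℝ} (h : HasFDerivAt f (dd p q) x)
    (hp : p = p') (hq : q = q') : HasFDerivAt f (dd p' q') x := hp ▸ hq ▸ h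

lemma hd_add {f g : ℂ → ℝ} {x : ℂ} {p q r s : ℝ} (hf : HasFDerivAt f (dd p q) x)
    (hg : HasFDerivAt g (dd r s) x) :
    HasFDerivAt (fun y => f y + g y) (dd (p + r) (q + s)) x := by
  rw [← dd_add]; exact hf.add hg

lemma hd_cmul {f : ℂ → ℝ} {x : ℂ} {p q : ℝ} (c : ℝ) (hf : HasFDerivAt f (dd p q) x) :
    HasFDerivAt (fun y => c * f y) (dd (c * p) (c * q)) x := by
  rw [← dd_smul]; exact hf.const_mul c

lemma hd_mul {f g : ℂ → ℝ} {x : ℂ} {p q r s : ℝ} (hf : HasFDerivAt f (dd p q) x)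
    (hg : HasFDerivAt g (dd r s) x) :
    HasFDerivAt (fun y => f y * g y)
      (dd (f x * r + g x * p) (f x * s + g x * q)) x := by
  have := hf.mul hg
  rw [dd_smul, dd_smul, dd_add] at this
  exact this

lemma hd_comp {φ : ℝ → ℝ} {f : ℂ → ℝ} {x : ℂ} {d p q : ℝ}
    (hφ : HasDerivAt φ d (f x)) (hf : HasFDerivAt f (dd p q) x) :
    HasFDerivAt (fun y => φ (f y)) (dd (d * p) (d * q)) x := by
  rw [← dd_smul]; exact hφ.comp_hasFDerivAt x hf

lemma hd_re {x : ℂ} : HasFDerivAt (fun y : ℂ => y.re) (dd 1 0) x := by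
  have : (dd 1 0) = Complex.reCLM := by ext v; simp [dd_apply]
  rw [this]; exact Complex.reCLM.hasFDerivAt

lemma hd_im {x : ℂ} : HasFDerivAt (fun y : ℂ => y.im) (dd 0 1) x := by
  have : (dd 0 1) = Complex.imCLM := by ext v; simp [dd_apply]
  rw [this]; exact Complex.imCLM.hasFDerivAt

lemma hd_normSq {x : ℂ} :
    HasFDerivAt (fun y : ℂ => Complex.normSq y) (dd (2 * x.re) (2 * x.im)) x := by
  have : (fun y : ℂ => Complex.normSq y) = fun y : ℂ => y.re * y.re + y.im * y.im := by
    funext y; exact Complex.normSq_apply y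
  rw [this]
  exact hd_congr (hd_add (hd_mul hd_re hd_re) (hd_mul hd_im hd_im)) (by ring) (by ring)

noncomputable def sig (t : ℝ) : ℝ := Real.exp t * (1 + Real.exp t)⁻¹
noncomputable def sig' (t : ℝ) : ℝ := Real.exp t * ((1 + Real.exp t) ^ 2)⁻¹

lemma pos1exp (t : ℝ) : (0:ℝ) < 1 + Real.exp t := by positivity

lemma hasDerivAt_softplus (t : ℝ) :
    HasDerivAt (fun s => Real.log (1 + Real.exp s)) (sig t) t := by
  have h1 : HasDerivAt (fun s : ℝ => 1 + Real.exp s) (Real.exp t) t :=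
    (Real.hasDerivAt_exp t).const_add 1
  have h2 := (Real.hasDerivAt_log (pos1exp t).ne').comp t h1
  refine h2.congr_deriv ?_
  simp only [sig]; ring

lemma hasDerivAt_sig (t : ℝ) : HasDerivAt sig (sig' t) t := by
  have h1 : HasDerivAt (fun s : ℝ => 1 + Real.exp s) (Real.exp t) t :=
    (Real.hasDerivAt_exp t).const_add 1
  have h2 : HasDerivAt (fun s : ℝ => (1 + Real.exp s)⁻¹)
      (-((1 + Real.exp t) ^ 2)⁻¹ * Real.exp t) t :=
    (hasDerivAt_inv (pos1exp t).ne').comp t h1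
  have h3 := (Real.hasDerivAt_exp t).mul h2
  refine h3.congr_deriv ?_
  have hne : (1 + Real.exp t) ≠ 0 := (pos1exp t).ne'
  simp only [sig']
  field_simp
  ring

lemma hd_inv {x : ℂ} (hx : x ≠ 0) :
    HasFDerivAt (fun y : ℂ => (Complex.normSq y)⁻¹)
      (dd (-((Complex.normSq x) ^ 2)⁻¹ * (2 * x.re))
          (-((Complex.normSq x) ^ 2)⁻¹ * (2 * x.im))) x :=
  hd_comp (hasDerivAt_inv (Complex.normSq_pos.2 hx).ne') hd_normSq

lemma hd_A {y : ℂ} (hy : y ≠ 0) :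
    HasFDerivAt (fun z : ℂ => (1/2) * Real.log (Complex.normSq z))
      (dd (y.re * (Complex.normSq y)⁻¹) (y.im * (Complex.normSq y)⁻¹)) y := by
  have hq := (Complex.normSq_pos.2 hy)
  have h := hd_cmul (1/2) (hd_comp (Real.hasDerivAt_log hq.ne') hd_normSq)
  exact hd_congr h (by field_simp) (by field_simp)

lemma abs_rpow_exp {y : ℂ} (hy : y ≠ 0) (a N : ℝ) (u : ℂ → ℝ) :
    ‖y‖ ^ (2 * N) * Real.exp ((1 - a) * u y)
      = Real.exp (2 * N * ((1/2) * Real.log (Complex.normSq y)) + (1 - a) * u y) := by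
  have hpos : 0 < ‖y‖ := norm_pos_iff.mpr hy
  rw [Real.rpow_def_of_pos hpos, Complex.norm_def,
    Real.log_sqrt (Complex.normSq_nonneg y), ← Real.exp_add]
  congr 1
  ring

set_option maxHeartbeats 1000000 in
lemma master (a N c V : ℝ) {u : ℂ → ℝ} (hu : ContDiff ℝ (⊤ : ℕ∞) u)
    (x : ℂ) (hx : x ≠ 0)
    (hVx : V = ‖x‖ ^ (2 * N) * Real.exp ((1 - a) * u x)) :
    ∃ g : ℝ, 0 ≤ g ∧
      lap (fun y => c * (u y + 1/a *
          Real.log (1 + ‖y‖ ^ (2 * N) * Real.exp ((1 - a) * u y)))) x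
      = c * ((1 + (1 - a)/a * (V / (1 + V))) * lap u x
          + 1/a * (V / (1 + V) ^ 2) * g) := by
  have hqpos : 0 < Complex.normSq x := Complex.normSq_pos.2 hx
  have hqne := hqpos.ne'
  -- first derivatives of u
  have hud : ∀ y, HasFDerivAt u (dd (fderiv ℝ u y 1) (fderiv ℝ u y Complex.I)) y := by
    intro y
    have h := (hu.differentiable (by simp) y).hasFDerivAt
    rwa [clm_eq_dd (fderiv ℝ u y)] at h
  -- smoothness of the partials of u
  have hu₁c : ContDiff ℝ (⊤ : ℕ∞) (fun y => fderiv ℝ u y 1) :=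
    (hu.fderiv_right (by simp)).clm_apply contDiff_const
  have hu₂c : ContDiff ℝ (⊤ : ℕ∞) (fun y => fderiv ℝ u y Complex.I) :=
    (hu.fderiv_right (by simp)).clm_apply contDiff_const
  have hu₁d : HasFDerivAt (fun y => fderiv ℝ u y 1)
      (dd (fderiv ℝ (fun y => fderiv ℝ u y 1) x 1)
          (fderiv ℝ (fun y => fderiv ℝ u y 1) x Complex.I)) x := by
    have h := (hu₁c.differentiable (by simp) x).hasFDerivAt
    rwa [clm_eq_dd (fderiv ℝ (fun y => fderiv ℝ u y 1) x)] at h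
  have hu₂d : HasFDerivAt (fun y => fderiv ℝ u y Complex.I)
      (dd (fderiv ℝ (fun y => fderiv ℝ u y Complex.I) x 1)
          (fderiv ℝ (fun y => fderiv ℝ u y Complex.I) x Complex.I)) x := by
    have h := (hu₂c.differentiable (by simp) x).hasFDerivAt
    rwa [clm_eq_dd (fderiv ℝ (fun y => fderiv ℝ u y Complex.I) x)] at h
  -- Laplacian of u as sum of second partials
  have hlapu : lap u x
      = fderiv ℝ (fun y => fderiv ℝ u y 1) x 1
        + fderiv ℝ (fun y => fderiv ℝ u y Complex.I) x Complex.I :=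
    lap_formula (Filter.Eventually.of_forall hud)
      (hu₁c.differentiable (by simp) x) (hu₂c.differentiable (by simp) x)
  -- derivative of h := 2N log|y| + (1-a) u
  have hhd : ∀ y : ℂ, y ≠ 0 → HasFDerivAt
      (fun y => 2*N*((1/2) * Real.log (Complex.normSq y)) + (1-a) * u y)
      (dd (2*N*(y.re * (Complex.normSq y)⁻¹) + (1-a) * fderiv ℝ u y 1)
          (2*N*(y.im * (Complex.normSq y)⁻¹) + (1-a) * fderiv ℝ u y Complex.I)) y :=
    fun y hy => hd_add (hd_cmul (2*N) (hd_A hy)) (hd_cmul (1-a) (hud y))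
  -- eventual representation of the big function
  have hFev : ∀ᶠ y in nhds x, HasFDerivAt
      (fun y => c * (u y + 1/a *
          Real.log (1 + ‖y‖ ^ (2 * N) * Real.exp ((1 - a) * u y))))
      (dd (c * (fderiv ℝ u y 1 + 1/a *
            (sig (2*N*((1/2) * Real.log (Complex.normSq y)) + (1-a) * u y)
              * (2*N*(y.re * (Complex.normSq y)⁻¹) + (1-a) * fderiv ℝ u y 1))))
          (c * (fderiv ℝ u y Complex.I + 1/a *
            (sig (2*N*((1/2) * Real.log (Complex.normSq y)) + (1-a) * u y)
              * (2*N*(y.im * (Complex.normSq y)⁻¹) + (1-a) * fderiv ℝ u y Complex.I))))) y := by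
    filter_upwards [isOpen_compl_singleton.eventually_mem hx] with y hy
    have hy' : y ≠ 0 := hy
    have hsp : HasFDerivAt (fun z => Real.log (1 + Real.exp
        (2*N*((1/2) * Real.log (Complex.normSq z)) + (1-a) * u z)))
        (dd (sig (2*N*((1/2) * Real.log (Complex.normSq y)) + (1-a) * u y)
              * (2*N*(y.re * (Complex.normSq y)⁻¹) + (1-a) * fderiv ℝ u y 1))
            (sig (2*N*((1/2) * Real.log (Complex.normSq y)) + (1-a) * u y)
              * (2*N*(y.im * (Complex.normSq y)⁻¹) + (1-a) * fderiv ℝ u y Complex.I))) y :=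
      hd_comp (φ := fun s => Real.log (1 + Real.exp s)) (hasDerivAt_softplus _) (hhd y hy')
    have hbig := hd_cmul c (hd_add (hud y) (hd_cmul (1/a) hsp))
    apply hbig.congr_of_eventuallyEq
    filter_upwards [isOpen_compl_singleton.eventually_mem hy'] with z hz
    have hz' : (z : ℂ) ≠ 0 := hz
    rw [abs_rpow_exp hz' a N u]
  -- second derivatives at x of the pieces
  have hA1x : HasFDerivAt (fun y : ℂ => y.re * (Complex.normSq y)⁻¹)
      (dd ((x.im^2 - x.re^2) * ((Complex.normSq x)^2)⁻¹)
          (-(2*x.re*x.im) * ((Complex.normSq x)^2)⁻¹)) x := by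
    refine hd_congr (hd_mul hd_re (hd_inv hx)) ?_ ?_ <;>
      · rw [Complex.normSq_apply]
        have h : x.re*x.re + x.im*x.im ≠ 0 := by rw [← Complex.normSq_apply]; exact hqne
        field_simp
        ring
  have hA2x : HasFDerivAt (fun y : ℂ => y.im * (Complex.normSq y)⁻¹)
      (dd (-(2*x.re*x.im) * ((Complex.normSq x)^2)⁻¹)
          ((x.re^2 - x.im^2) * ((Complex.normSq x)^2)⁻¹)) x := by
    refine hd_congr (hd_mul hd_im (hd_inv hx)) ?_ ?_ <;>
      · rw [Complex.normSq_apply]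
        have h : x.re*x.re + x.im*x.im ≠ 0 := by rw [← Complex.normSq_apply]; exact hqne
        field_simp
        ring
  have hh1x := hd_add (hd_cmul (2*N) hA1x) (hd_cmul (1-a) hu₁d)
  have hh2x := hd_add (hd_cmul (2*N) hA2x) (hd_cmul (1-a) hu₂d)
  have hsigx := hd_comp (hasDerivAt_sig
      (2*N*((1/2) * Real.log (Complex.normSq x)) + (1-a) * u x)) (hhd x hx)
  have hPx := hd_cmul c (hd_add hu₁d (hd_cmul (1/a) (hd_mul hsigx hh1x)))
  have hQx := hd_cmul c (hd_add hu₂d (hd_cmul (1/a) (hd_mul hsigx hh2x)))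
  -- assemble
  refine ⟨(2*N*(x.re * (Complex.normSq x)⁻¹) + (1-a) * fderiv ℝ u x 1)^2
    + (2*N*(x.im * (Complex.normSq x)⁻¹) + (1-a) * fderiv ℝ u x Complex.I)^2,
    by positivity, ?_⟩
  rw [lap_formula hFev hPx.differentiableAt hQx.differentiableAt,
    hPx.fderiv, hQx.fderiv, dd_apply, dd_apply]
  have hxV : Real.exp (2*N*((1/2) * Real.log (Complex.normSq x)) + (1-a) * u x) = V :=
    (hVx.trans (abs_rpow_exp hx a N u)).symm
  rw [hlapu]
  simp only [sig, sig', hxV, Complex.one_re, Complex.one_im, Complex.I_re, Complex.I_im]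
  ring

lemma lap_const_add (k : ℝ) (f : ℂ → ℝ) (x : ℂ) :
    lap (fun y => k + f y) x = lap f x := by
  have h : fderiv ℝ (fun y => k + f y) = fderiv ℝ f := by
    funext y; exact fderiv_const_add k
  simp only [lap, iteratedFDeriv_two_apply, h]

/-- the auxiliary function ξ = u + (1/a) log(1+V) satisfies a
Liouville-type differential inequality (Alexandrov–Bol setup). -/
theorem stmt6 (a N : ℝ) (ha : 0 < a) (hN : 1 ≤ N)
    (u V ξ : ℂ → ℝ) (hu : ContDiff ℝ (⊤ : ℕ∞) u)
    (hpde : ∀ x, lap u x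
      = -(Real.exp (a * u x) + ‖x‖ ^ (2 * N) * Real.exp (u x)))
    (hV : ∀ x, V x = ‖x‖ ^ (2 * N) * Real.exp ((1 - a) * u x))
    (hξ : ∀ x, ξ x = u x + (1 / a) * Real.log (1 + V x)) :
    (∀ x : ℂ, x ≠ 0 →
      -lap ξ x ≤ ((a + V x) / (a * (1 + V x))) * Real.exp (a * ξ x)) ∧
    (a ≤ 1 → ∀ x : ℂ, x ≠ 0 →
      -lap (fun y => Real.log (Real.exp (a * ξ y))) x ≤ Real.exp (a * ξ x) / a) ∧
    (1 < a → ∀ x : ℂ, x ≠ 0 →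
      -lap (fun y => Real.log (a * Real.exp (a * ξ y))) x ≤ a * Real.exp (a * ξ x)) := by
  have ha' : a ≠ 0 := ha.ne'
  -- pointwise facts
  have hVpos : ∀ x : ℂ, x ≠ 0 → 0 < V x := by
    intro x hx
    rw [hV x]
    exact mul_pos (Real.rpow_pos_of_pos (norm_pos_iff.mpr hx) _) (Real.exp_pos _)
  have hlapux : ∀ x : ℂ, x ≠ 0 → lap u x = -(Real.exp (a * u x) * (1 + V x)) := by
    intro x hx
    have hsplit : Real.exp ((1 - a) * u x) * Real.exp (a * u x) = Real.exp (u x) := by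
      rw [← Real.exp_add]; congr 1; ring
    rw [hpde x, hV x, ← hsplit]; ring
  have hE : ∀ x : ℂ, x ≠ 0 → Real.exp (a * ξ x) = Real.exp (a * u x) * (1 + V x) := by
    intro x hx
    have h1V : (0:ℝ) < 1 + V x := by have := hVpos x hx; linarith
    have harg : a * (u x + (1 / a) * Real.log (1 + V x))
        = a * u x + Real.log (1 + V x) := by field_simp
    rw [hξ x, harg, Real.exp_add, Real.exp_log h1V]
  have hξ1 : ξ = fun y => 1 * (u y + 1/a *
      Real.log (1 + ‖y‖ ^ (2 * N) * Real.exp ((1 - a) * u y))) := by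
    funext y; rw [hξ y, hV y]; ring
  refine ⟨?_, ?_, ?_⟩
  · -- part 1
    intro x hx
    obtain ⟨g, hg0, hlap⟩ := master a N 1 (V x) hu x hx (hV x)
    have hlξ : lap ξ x = 1 * ((1 + (1 - a)/a * (V x / (1 + V x))) * lap u x
        + 1/a * (V x / (1 + V x) ^ 2) * g) := by rw [hξ1]; exact hlap
    have hVp := hVpos x hx
    have h1V : (0:ℝ) < 1 + V x := by linarith
    rw [hlξ, hlapux x hx, hE x hx]
    have hrearrange : -(1 * ((1 + (1 - a)/a * (V x / (1 + V x)))
          * (-(Real.exp (a * u x) * (1 + V x))) + 1/a * (V x / (1 + V x) ^ 2) * g))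
        = (1 + (1 - a)/a * (V x / (1 + V x))) * (Real.exp (a * u x) * (1 + V x))
          - 1/a * (V x / (1 + V x) ^ 2) * g := by ring
    have hmain : (1 + (1 - a)/a * (V x / (1 + V x))) * (Real.exp (a * u x) * (1 + V x))
        = (a + V x) / (a * (1 + V x)) * (Real.exp (a * u x) * (1 + V x)) := by
      field_simp
      ring
    have hdrop : 0 ≤ 1/a * (V x / (1 + V x) ^ 2) * g := by positivity
    rw [hrearrange, hmain]
    linarith
  · -- part 2
    intro haa x hx
    obtain ⟨g, hg0, hlap⟩ := master a N a (V x) hu x hx (hV x)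
    have hfun2 : (fun y => Real.log (Real.exp (a * ξ y))) = fun y => a * (u y + 1/a *
        Real.log (1 + ‖y‖ ^ (2 * N) * Real.exp ((1 - a) * u y))) := by
      funext y; rw [Real.log_exp, hξ y, hV y]
    have hlξ : lap (fun y => Real.log (Real.exp (a * ξ y))) x
        = a * ((1 + (1 - a)/a * (V x / (1 + V x))) * lap u x
          + 1/a * (V x / (1 + V x) ^ 2) * g) := by rw [hfun2]; exact hlap
    have hVp := hVpos x hx
    have h1V : (0:ℝ) < 1 + V x := by linarith
    have hEp := Real.exp_pos (a * u x)
    rw [hlξ, hlapux x hx, hE x hx]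
    have hrearrange : -(a * ((1 + (1 - a)/a * (V x / (1 + V x)))
          * (-(Real.exp (a * u x) * (1 + V x))) + 1/a * (V x / (1 + V x) ^ 2) * g))
        = (a + V x) * Real.exp (a * u x)
          - a * (1/a * (V x / (1 + V x) ^ 2) * g) := by
      field_simp
      ring
    rw [hrearrange]
    have hk : a * (a + V x) ≤ 1 + V x := by nlinarith
    have hmain : (a + V x) * Real.exp (a * u x) ≤ Real.exp (a * u x) * (1 + V x) / a := by
      rw [le_div_iff₀ ha]
      nlinarith
    have hdrop : 0 ≤ a * (1/a * (V x / (1 + V x) ^ 2) * g) := by positivity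
    linarith
  · -- part 3
    intro haa x hx
    obtain ⟨g, hg0, hlap⟩ := master a N a (V x) hu x hx (hV x)
    have hfun3 : (fun y => Real.log (a * Real.exp (a * ξ y))) = fun y => Real.log a
        + a * (u y + 1/a *
          Real.log (1 + ‖y‖ ^ (2 * N) * Real.exp ((1 - a) * u y))) := by
      funext y
      rw [Real.log_mul ha' (Real.exp_ne_zero _), Real.log_exp, hξ y, hV y]
    have hlξ : lap (fun y => Real.log (a * Real.exp (a * ξ y))) x
        = a * ((1 + (1 - a)/a * (V x / (1 + V x))) * lap u x
          + 1/a * (V x / (1 + V x) ^ 2) * g) := by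
      rw [hfun3, lap_const_add]; exact hlap
    have hVp := hVpos x hx
    have h1V : (0:ℝ) < 1 + V x := by linarith
    have hEp := Real.exp_pos (a * u x)
    rw [hlξ, hlapux x hx, hE x hx]
    have hrearrange : -(a * ((1 + (1 - a)/a * (V x / (1 + V x)))
          * (-(Real.exp (a * u x) * (1 + V x))) + 1/a * (V x / (1 + V x) ^ 2) * g))
        = (a + V x) * Real.exp (a * u x)
          - a * (1/a * (V x / (1 + V x) ^ 2) * g) := by
      field_simp
      ring
    rw [hrearrange]
    have hmain : (a + V x) * Real.exp (a * u x) ≤ a * (Real.exp (a * u x) * (1 + V x)) := by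
      nlinarith [mul_nonneg (mul_pos (sub_pos.2 haa) hVp).le hEp.le]
    have hdrop : 0 ≤ a * (1/a * (V x / (1 + V x) ^ 2) * g) := by positivity
    linarith
end

section
/- Let N ≥ 1 and define f(a) = (1/(2a))·(√((1−a(N+1))² + Na/(1−a)) − (1−a(N+1))) for a ∈ (0, 1/(N+1)). Then f is strictly monotone increasing on (0, 1/(N+1)), and N/4 < f(a) < (N+1)/2 for all a in this interval. -/
private lemma stmt9_key (N a : ℝ) (hN : 1 ≤ N) (ha0 : 0 < a) (ha1 : a * (N + 1) < 1) :
    0 < (1 / (2 * a)) *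
        (Real.sqrt ((1 - a * (N + 1)) ^ 2 + N * a / (1 - a)) - (1 - a * (N + 1))) ∧
    4 * (a * ((1 / (2 * a)) *
        (Real.sqrt ((1 - a * (N + 1)) ^ 2 + N * a / (1 - a)) - (1 - a * (N + 1)))) ^ 2
      + (1 - a * (N + 1)) * ((1 / (2 * a)) *
        (Real.sqrt ((1 - a * (N + 1)) ^ 2 + N * a / (1 - a)) - (1 - a * (N + 1)))))
      * (1 - a) = N := by
  have ha' : a < 1 := by nlinarith
  have hB : 0 < 1 - a * (N + 1) := by linarith
  have h1a : (1:ℝ) - a ≠ 0 := by linarith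
  have hC : 0 < N * a / (1 - a) := div_pos (by positivity) (by linarith)
  set C := N * a / (1 - a) with hCdef
  set B := 1 - a * (N + 1) with hBdef
  set s := Real.sqrt (B ^ 2 + C) with hsdef
  have hs2 : s ^ 2 = B ^ 2 + C := Real.sq_sqrt (by positivity)
  have hsB : B < s := by
    nlinarith [Real.sqrt_nonneg (B ^ 2 + C), hs2]
  constructor
  · have : 0 < 1 / (2 * a) := by positivity
    nlinarith
  · have hCe : C * (1 - a) = N * a := by
      rw [hCdef]; field_simp
    have h2 : a ≠ 0 := ne_of_gt ha0
    field_simp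
    linear_combination (4 * (1 - a)) * hs2 + 4 * hCe

private lemma stmt9_bnds (N a y : ℝ) (hN : 1 ≤ N) (ha0 : 0 < a) (ha1 : a * (N + 1) < 1)
    (hy : 0 < y) (he : 4 * (a * y ^ 2 + (1 - a * (N + 1)) * y) * (1 - a) = N) :
    N / 4 < y ∧ y < (N + 1) / 2 := by
  have ha' : a < 1 := by nlinarith
  constructor
  · by_contra h
    push_neg at h
    nlinarith [mul_pos ha0 hy, mul_pos ha0 ha0, sq_nonneg y, mul_nonneg ha0.le (sub_nonneg.2 h),
      mul_pos (mul_pos ha0 ha0) hy, mul_nonneg (mul_nonneg ha0.le ha0.le) (sub_nonneg.2 h)]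
  · by_contra h
    push_neg at h
    have h1 : 0 < 1 - a * (N + 1) := by linarith
    nlinarith [mul_nonneg (mul_nonneg ha0.le (sub_nonneg.2 h)) (by linarith : 0 ≤ y + (N+1)/2),
      mul_nonneg h1.le (sub_nonneg.2 h),
      mul_pos (mul_pos (by linarith : (0:ℝ) < 1 - a*(N+1)) (by nlinarith : (0:ℝ) < N + 2 - a*(N+1))) (by linarith : (0:ℝ) < 1 - a)]

private lemma stmt9_mono (N a₁ a₂ y₁ y₂ : ℝ) (hN : 1 ≤ N) (ha0 : 0 < a₁) (h12 : a₁ < a₂)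
    (ha1 : a₂ * (N + 1) < 1)
    (hy1 : 0 < y₁) (hy2 : 0 < y₂) (hub : y₁ < (N + 1) / 2)
    (he1 : 4 * (a₁ * y₁ ^ 2 + (1 - a₁ * (N + 1)) * y₁) * (1 - a₁) = N)
    (he2 : 4 * (a₂ * y₂ ^ 2 + (1 - a₂ * (N + 1)) * y₂) * (1 - a₂) = N) :
    y₁ < y₂ := by
  have ha2 : 0 < a₂ := lt_trans ha0 h12
  have ha2' : a₂ < 1 := by nlinarith
  have ha1' : a₁ < 1 := by linarith
  have hB2 : 0 < 1 - a₂ * (N + 1) := by linarith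
  by_contra h
  push_neg at h
  have h1 : a₂ * y₂ ^ 2 + (1 - a₂ * (N + 1)) * y₂ ≤ a₂ * y₁ ^ 2 + (1 - a₂ * (N + 1)) * y₁ := by
    nlinarith [mul_nonneg ha2.le (mul_nonneg (sub_nonneg.2 h) (by linarith : (0:ℝ) ≤ y₁ + y₂)),
      mul_nonneg hB2.le (sub_nonneg.2 h)]
  have h2 : a₂ * y₁ ^ 2 + (1 - a₂ * (N + 1)) * y₁ < a₁ * y₁ ^ 2 + (1 - a₁ * (N + 1)) * y₁ := by
    nlinarith [mul_pos (sub_pos.2 h12) (mul_pos hy1 (by linarith : (0:ℝ) < N + 1 - y₁))]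
  have hg1 : 0 < a₁ * y₁ ^ 2 + (1 - a₁ * (N + 1)) * y₁ := by nlinarith
  nlinarith [mul_lt_mul_of_pos_right (lt_of_le_of_lt h1 h2) (by linarith : (0:ℝ) < 1 - a₂),
    mul_lt_mul_of_pos_left (by linarith : 1 - a₂ < 1 - a₁) hg1]

/-- the function f is strictly increasing on (0, 1/(N+1)) and
takes values in (N/4, (N+1)/2). -/
theorem stmt9 (N : ℝ) (hN : 1 ≤ N) :
    StrictMonoOn
      (fun a : ℝ => (1 / (2 * a)) *
        (Real.sqrt ((1 - a * (N + 1)) ^ 2 + N * a / (1 - a)) - (1 - a * (N + 1))))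
      (Set.Ioo 0 (1 / (N + 1))) ∧
    ∀ a ∈ Set.Ioo (0 : ℝ) (1 / (N + 1)),
      N / 4 < (1 / (2 * a)) *
        (Real.sqrt ((1 - a * (N + 1)) ^ 2 + N * a / (1 - a)) - (1 - a * (N + 1))) ∧
      (1 / (2 * a)) *
        (Real.sqrt ((1 - a * (N + 1)) ^ 2 + N * a / (1 - a)) - (1 - a * (N + 1)))
        < (N + 1) / 2 := by
  have hN1 : (0:ℝ) < N + 1 := by linarith
  have hmem : ∀ a ∈ Set.Ioo (0 : ℝ) (1 / (N + 1)), 0 < a ∧ a * (N + 1) < 1 := by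
    intro a ha
    exact ⟨ha.1, (lt_div_iff₀ hN1).mp ha.2⟩
  constructor
  · intro a₁ h₁ a₂ h₂ h12
    obtain ⟨ha0₁, ha1₁⟩ := hmem a₁ h₁
    obtain ⟨ha0₂, ha1₂⟩ := hmem a₂ h₂
    obtain ⟨hy1, he1⟩ := stmt9_key N a₁ hN ha0₁ ha1₁
    obtain ⟨hy2, he2⟩ := stmt9_key N a₂ hN ha0₂ ha1₂
    obtain ⟨_, hub⟩ := stmt9_bnds N a₁ _ hN ha0₁ ha1₁ hy1 he1
    exact stmt9_mono N a₁ a₂ _ _ hN ha0₁ h12 ha1₂ hy1 hy2 hub he1 he2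
  · intro a ha
    obtain ⟨ha0, ha1⟩ := hmem a ha
    obtain ⟨hy, he⟩ := stmt9_key N a hN ha0 ha1
    exact stmt9_bnds N a _ hN ha0 ha1 hy he
end

section
/- Let N ≥ 1 and a ∈ (0, 1/(N+1)). Then √((1−a(N+1))² + Na/(1−a)) < 1. -/
/-- key inequality √((1-a(N+1))² + Na/(1-a)) < 1. -/
theorem stmt10 (N a : ℝ) (hN : 1 ≤ N) (ha : a ∈ Set.Ioo 0 (1 / (N + 1))) :
    Real.sqrt ((1 - a * (N + 1)) ^ 2 + N * a / (1 - a)) < 1 := by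
  obtain ⟨ha0, ha1⟩ := ha
  have hN1 : (0:ℝ) < N + 1 := by linarith
  have haN : a * (N + 1) < 1 := by
    have := (lt_div_iff₀ hN1).mp ha1
    linarith
  have h1a : 0 < 1 - a := by nlinarith
  have hgap : 0 < 1 / (N + 1) - a := by linarith
  have key : N * a / (1 - a) < 1 - (1 - a * (N + 1)) ^ 2 := by
    rw [div_lt_iff₀ h1a]
    nlinarith [mul_pos (mul_pos (mul_pos ha0 hN1) h1a) (show (0:ℝ) < 1 - a*(N+1) by linarith)]
  have hx : (1 - a * (N + 1)) ^ 2 + N * a / (1 - a) < 1 := by linarith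
  calc Real.sqrt ((1 - a * (N + 1)) ^ 2 + N * a / (1 - a)) < Real.sqrt 1 := by
        apply Real.sqrt_lt_sqrt _ hx
        positivity
    _ = 1 := Real.sqrt_one
end

section
/- Let N ≥ 1 and a ∈ (0, 1/(N+1)). Define f(a) = (1/(2a))·(√((1−a(N+1))² + Na/(1−a)) − (1−a(N+1))) and a_N = (4−N)/(2(N+1+√((N−1)²+N²))) for 1 ≤ N < 4 and a_N = 0 for N ≥ 4. Then f(a) ≥ 1 if and only if N > 1 and a_N ≤ a < 1/(N+1). -/
set_option maxHeartbeats 1000000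


/-- f(a) ≥ 1 iff N > 1 and a_N ≤ a < 1/(N+1). -/
theorem stmt11 (N : ℝ) (hN : 1 ≤ N) (a : ℝ) (ha : a ∈ Set.Ioo 0 (1 / (N + 1))) :
    1 ≤ (1 / (2 * a)) *
      (Real.sqrt ((1 - a * (N + 1)) ^ 2 + N * a / (1 - a)) - (1 - a * (N + 1))) ↔
    (1 < N ∧
      (if N < 4 then (4 - N) / (2 * (N + 1 + Real.sqrt ((N - 1) ^ 2 + N ^ 2))) else 0) ≤ a ∧
      a < 1 / (N + 1)) := by
  obtain ⟨ha0, ha2⟩ := ha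
  have hN1 : (0:ℝ) < N + 1 := by linarith
  have haN1 : a * (N + 1) < 1 := by
    have h := (lt_div_iff₀ hN1).mp ha2
    linarith
  have h1a : 0 < 1 - a := by nlinarith
  have hB : 0 < 1 - a * (N + 1) := by linarith
  -- Step 1: reduce to a quadratic inequality
  have key : (1 ≤ (1 / (2 * a)) *
      (Real.sqrt ((1 - a * (N + 1)) ^ 2 + N * a / (1 - a)) - (1 - a * (N + 1)))) ↔
      4 * N * a ^ 2 - 4 * (N + 1) * a + (4 - N) ≤ 0 := by
    have h2a : 0 < 2 * a := by linarith
    have hNa : 0 ≤ N * a / (1 - a) := by positivity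
    have hS : 0 ≤ (1 - a * (N + 1)) ^ 2 + N * a / (1 - a) := by positivity
    have hlhs : (1 / (2 * a)) *
        (Real.sqrt ((1 - a * (N + 1)) ^ 2 + N * a / (1 - a)) - (1 - a * (N + 1)))
        = (Real.sqrt ((1 - a * (N + 1)) ^ 2 + N * a / (1 - a)) - (1 - a * (N + 1))) / (2 * a) := by
      ring
    rw [hlhs, le_div_iff₀ h2a, one_mul, ← sub_nonneg]
    constructor
    · intro h
      have hsqrt : 2 * a + (1 - a * (N + 1)) ≤
          Real.sqrt ((1 - a * (N + 1)) ^ 2 + N * a / (1 - a)) := by linarith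
      have hsq : (2 * a + (1 - a * (N + 1))) ^ 2 ≤ (1 - a * (N + 1)) ^ 2 + N * a / (1 - a) :=
        (Real.le_sqrt (by linarith) hS).mp hsqrt
      have h2 : ((2 * a + (1 - a * (N + 1))) ^ 2 - (1 - a * (N + 1)) ^ 2) * (1 - a) ≤ N * a := by
        rw [← le_div_iff₀ h1a]; linarith
      nlinarith [mul_pos ha0 ha0]
    · intro hQ
      have h2 : ((2 * a + (1 - a * (N + 1))) ^ 2 - (1 - a * (N + 1)) ^ 2) * (1 - a) ≤ N * a := by
        nlinarith [mul_nonpos_of_nonneg_of_nonpos ha0.le hQ]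
      have h3 : (2 * a + (1 - a * (N + 1))) ^ 2 - (1 - a * (N + 1)) ^ 2 ≤ N * a / (1 - a) := by
        rw [le_div_iff₀ h1a]; linarith
      have hsq : (2 * a + (1 - a * (N + 1))) ^ 2 ≤ (1 - a * (N + 1)) ^ 2 + N * a / (1 - a) := by
        linarith
      have hsqrt : 2 * a + (1 - a * (N + 1)) ≤
          Real.sqrt ((1 - a * (N + 1)) ^ 2 + N * a / (1 - a)) :=
        (Real.le_sqrt (by linarith) hS).mpr hsq
      linarith
  rw [key]
  by_cases h4 : N < 4
  · rw [if_pos h4]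
    set s := Real.sqrt ((N - 1) ^ 2 + N ^ 2) with hsdef
    have hs0 : 0 ≤ s := Real.sqrt_nonneg _
    have hs2 : s ^ 2 = (N - 1) ^ 2 + N ^ 2 := Real.sq_sqrt (by positivity)
    have hden : 0 < 2 * (N + 1 + s) := by nlinarith
    have h4N : 0 < 4 - N := by linarith
    constructor
    · intro hQ
      have hN1' : 1 < N := by
        by_contra h
        have hEq : N = 1 := le_antisymm (not_lt.mp h) hN
        rw [hEq] at hQ haN1
        nlinarith [mul_pos (show (0:ℝ) < 1 - 2 * a by linarith) (show (0:ℝ) < 3 - 2 * a by linarith)]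
      refine ⟨hN1', ?_, ha2⟩
      rw [div_le_iff₀ hden]
      -- goal: 4 - N ≤ a * (2 * (N + 1 + s))
      rcases le_or_gt ((4 - N) - 2 * a * (N + 1)) 0 with hX | hX
      · nlinarith [mul_nonneg ha0.le hs0]
      · have hY2 : ((4 - N) - 2 * a * (N + 1)) ^ 2 ≤ (2 * a * s) ^ 2 := by
          nlinarith [hs2, mul_nonneg h4N.le
            (show (0:ℝ) ≤ -(4 * N * a ^ 2 - 4 * (N + 1) * a + (4 - N)) by linarith)]
        have hXY : 0 < ((4 - N) - 2 * a * (N + 1)) + 2 * a * s := by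
          nlinarith [mul_nonneg ha0.le hs0]
        have hfin : (4 - N) - 2 * a * (N + 1) ≤ 2 * a * s := by
          by_contra hc
          push_neg at hc
          have hp := mul_pos hXY (show 0 < ((4 - N) - 2 * a * (N + 1)) - 2 * a * s by linarith)
          nlinarith [hY2, hp]
        have hexp : a * (2 * (N + 1 + s)) = 2 * a * (N + 1) + 2 * a * s := by ring
        rw [hexp]
        linarith
    · rintro ⟨hN1', hle, -⟩
      rw [div_le_iff₀ hden] at hle
      have hexp2 : a * (2 * (N + 1 + s)) = 2 * a * (N + 1) + 2 * a * s := by ring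
      rw [hexp2] at hle
      have hXleY : (4 - N) - 2 * a * (N + 1) ≤ 2 * a * s := by linarith
      have h1 : 2 * a * N < N + 1 + s := by nlinarith [ha0, haN1, hs0, hN]
      have hid : (N + 1 - s) * (N + 1 + s) = N * (4 - N) := by linear_combination -hs2
      have haplus : 2 * a * (N + 1 - s) ≤ 4 - N := by
        have h5 : (2 * a * (N + 1 - s)) * (N + 1 + s) ≤ (4 - N) * (N + 1 + s) := by
          have : (2 * a * (N + 1 - s)) * (N + 1 + s) = 2 * a * N * (4 - N) := by
            rw [mul_assoc (2*a), hid]; ring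
          rw [this]
          nlinarith [h1, h4N]
        have hpos : 0 < N + 1 + s := by linarith
        exact le_of_mul_le_mul_right h5 hpos
      have hnegY : -(2 * a * s) ≤ (4 - N) - 2 * a * (N + 1) := by linarith
      have hsq : ((4 - N) - 2 * a * (N + 1)) ^ 2 ≤ (2 * a * s) ^ 2 := by
        nlinarith [mul_nonneg (show (0:ℝ) ≤ 2 * a * s - ((4 - N) - 2 * a * (N + 1)) by linarith)
          (show (0:ℝ) ≤ 2 * a * s + ((4 - N) - 2 * a * (N + 1)) by linarith)]
      have hYval : (2 * a * s) ^ 2 = 4 * a ^ 2 * ((N - 1) ^ 2 + N ^ 2) := by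
        have h' : (2 * a * s) ^ 2 = 4 * a ^ 2 * s ^ 2 := by ring
        rw [h', hs2]
      by_contra hc
      push_neg at hc
      have hp := mul_pos h4N hc
      nlinarith [hsq, hYval, hp]
  · rw [if_neg h4]
    push_neg at h4
    constructor
    · intro _; exact ⟨by linarith, ha0.le, ha2⟩
    · intro _
      nlinarith [mul_pos ha0 ha0, mul_pos ha0 (show (0:ℝ) < 1 - a * N by nlinarith)]
end

section
/- Let N ≥ 1, a ∈ (0, 1/(N+1)), and define φ(t) = 1 − t + √((1−t)² + 2a(N+1)t − (Na/(1−a))t²) wherever the radicand is nonnegative. Then φ is strictly decreasing, and φ(t) ≥ 1 if and only if t ≤ t_a := ((1−a)/(aN))·(√((1−a(N+1))² + aN/(1−a)) − (1−a(N+1))). -/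
lemma stmt13_aux_key (b c : ℝ) (hc0 : 0 < c) (hc1 : c < 1) (hbc : b ^ 2 < c) :
    (∀ t : ℝ, 0 < c * t ^ 2 - 2 * b * t + 1) ∧
    (∀ x : ℝ, c * x - b < Real.sqrt (c * x ^ 2 - 2 * b * x + 1)) := by
  have qpos : ∀ t : ℝ, 0 < c * t ^ 2 - 2 * b * t + 1 := by
    intro t
    nlinarith [sq_nonneg (c * t - b)]
  refine ⟨qpos, fun x => ?_⟩
  rcases lt_or_ge (c * x - b) 0 with h | h
  · exact h.trans_le (Real.sqrt_nonneg _)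
  · apply Real.lt_sqrt_of_sq_lt
    nlinarith [qpos x, mul_pos (show (0:ℝ) < 1 - c by linarith) (qpos x)]

lemma stmt13_aux1 (b c : ℝ) (hc0 : 0 < c) (hc1 : c < 1) (hbc : b ^ 2 < c) :
    ∀ s t : ℝ, s < t →
      1 - t + Real.sqrt (c * t ^ 2 - 2 * b * t + 1) <
      1 - s + Real.sqrt (c * s ^ 2 - 2 * b * s + 1) := by
  obtain ⟨qpos, hkey⟩ := stmt13_aux_key b c hc0 hc1 hbc
  intro s t hst
  set A := Real.sqrt (c * s ^ 2 - 2 * b * s + 1) with hA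
  set B := Real.sqrt (c * t ^ 2 - 2 * b * t + 1) with hB
  have hA2 : A ^ 2 = c * s ^ 2 - 2 * b * s + 1 := Real.sq_sqrt (qpos s).le
  have hB2 : B ^ 2 = c * t ^ 2 - 2 * b * t + 1 := Real.sq_sqrt (qpos t).le
  have hA0 : 0 < A := Real.sqrt_pos.2 (qpos s)
  have hB0 : 0 < B := Real.sqrt_pos.2 (qpos t)
  have hks := hkey s
  have hkt := hkey t
  rw [← hA] at hks
  rw [← hB] at hkt
  have h1 : 0 < (t - s) * ((A + B) - ((c * s - b) + (c * t - b))) :=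
    mul_pos (by linarith) (by linarith)
  have h2 : B ^ 2 - A ^ 2 < (t - s) * (A + B) := by nlinarith [h1]
  have h3 : (B - A) * (A + B) < (t - s) * (A + B) := by nlinarith [h2]
  have h4 : B - A < t - s := by
    have hAB : 0 < A + B := by linarith
    have := lt_of_mul_lt_mul_right h3 hAB.le
    linarith
  linarith

lemma stmt13_aux2 (b c d : ℝ) (hb : 0 < b) (hc0 : 0 < c) (hd0 : 0 < d)
    (hcd : c + d = 1) (hbc : b ^ 2 < c) :
    ∀ t : ℝ,
      (1 ≤ 1 - t + Real.sqrt (c * t ^ 2 - 2 * b * t + 1) ↔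
        t ≤ (Real.sqrt (b ^ 2 + d) - b) / d) := by
  have hc1 : c < 1 := by linarith
  obtain ⟨qpos, _⟩ := stmt13_aux_key b c hc0 hc1 hbc
  intro t
  set S := Real.sqrt (b ^ 2 + d) with hSdef
  have hS2 : S ^ 2 = b ^ 2 + d := Real.sq_sqrt (by positivity)
  have hSb : b < S := Real.lt_sqrt_of_sq_lt (by linarith)
  set ta := (S - b) / d with htadef
  have hta0 : 0 < ta := div_pos (by linarith) hd0
  have hdta : d * ta = S - b := by
    rw [htadef]; field_simp
  have h3 : (d * ta) ^ 2 + 2 * b * (d * ta) = d := by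
    rw [hdta]; linear_combination hS2
  have hta1 : d * ta ^ 2 + 2 * b * ta = 1 :=
    mul_left_cancel₀ hd0.ne'
      (show d * (d * ta ^ 2 + 2 * b * ta) = d * 1 by linear_combination h3)
  set Q := Real.sqrt (c * t ^ 2 - 2 * b * t + 1) with hQdef
  have hQ0 : 0 ≤ Q := Real.sqrt_nonneg _
  constructor
  · intro h
    have hts : t ≤ Q := by linarith
    by_contra h'
    push_neg at h'
    have ht0 : 0 < t := lt_trans hta0 h'
    have ht2 : t ^ 2 ≤ c * t ^ 2 - 2 * b * t + 1 := by
      rw [hQdef] at hts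
      exact (Real.le_sqrt ht0.le (qpos t).le).1 hts
    have hd1 : d * t ^ 2 + 2 * b * t ≤ 1 := by nlinarith [ht2, sq_nonneg t]
    nlinarith [mul_pos (show (0:ℝ) < t - ta by linarith)
      (show (0:ℝ) < d * (t + ta) + 2 * b by positivity)]
  · intro h
    rcases le_or_gt t 0 with ht0 | ht0
    · linarith
    · have hd1 : d * t ^ 2 + 2 * b * t ≤ 1 := by
        nlinarith [mul_pos hd0 (mul_pos ht0 hta0)]
      have : t ≤ Q := by
        apply Real.le_sqrt_of_sq_le
        nlinarith [sq_nonneg t]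
      linarith

/-- φ(t) = 1 - t + √((1-t)² + 2a(N+1)t - (Na/(1-a))t²) is
strictly decreasing where defined, and φ(t) ≥ 1 iff t ≤ t_a. -/
theorem stmt13 (N a : ℝ) (hN : 1 ≤ N) (ha : a ∈ Set.Ioo 0 (1 / (N + 1))) :
    StrictAntiOn
      (fun t : ℝ => 1 - t +
        Real.sqrt ((1 - t) ^ 2 + 2 * a * (N + 1) * t - (N * a / (1 - a)) * t ^ 2))
      {t : ℝ | 0 ≤ (1 - t) ^ 2 + 2 * a * (N + 1) * t - (N * a / (1 - a)) * t ^ 2} ∧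
    ∀ t ∈ {t : ℝ | 0 ≤ (1 - t) ^ 2 + 2 * a * (N + 1) * t - (N * a / (1 - a)) * t ^ 2},
      (1 ≤ 1 - t +
        Real.sqrt ((1 - t) ^ 2 + 2 * a * (N + 1) * t - (N * a / (1 - a)) * t ^ 2) ↔
      t ≤ ((1 - a) / (a * N)) *
        (Real.sqrt ((1 - a * (N + 1)) ^ 2 + a * N / (1 - a)) - (1 - a * (N + 1)))) := by
  obtain ⟨ha0, ha1⟩ := ha
  have hN0 : (0:ℝ) < N := by linarith
  have hN1 : (0:ℝ) < N + 1 := by linarith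
  rw [lt_div_iff₀ hN1] at ha1
  have hb : 0 < 1 - a * (N + 1) := by linarith
  have h1a : 0 < 1 - a := by nlinarith
  have hc0 : 0 < (1 - a * (N + 1)) / (1 - a) := div_pos hb h1a
  have hd0 : 0 < a * N / (1 - a) := div_pos (mul_pos ha0 hN0) h1a
  have hcd : (1 - a * (N + 1)) / (1 - a) + a * N / (1 - a) = 1 := by
    field_simp
    ring
  have hc1 : (1 - a * (N + 1)) / (1 - a) < 1 := by linarith
  have hbc : (1 - a * (N + 1)) ^ 2 < (1 - a * (N + 1)) / (1 - a) := by
    rw [lt_div_iff₀ h1a]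
    have h5 : (1 - a * (N + 1)) * (1 - a) < 1 := by
      nlinarith [mul_pos ha0 hN1, mul_pos (mul_pos ha0 hN1) ha0]
    nlinarith [mul_pos hb (show (0:ℝ) < 1 - (1 - a * (N + 1)) * (1 - a) by linarith)]
  have hqeq : ∀ t : ℝ, (1 - t) ^ 2 + 2 * a * (N + 1) * t - (N * a / (1 - a)) * t ^ 2
      = ((1 - a * (N + 1)) / (1 - a)) * t ^ 2 - 2 * (1 - a * (N + 1)) * t + 1 := by
    intro t
    field_simp
    ring
  constructor
  · intro s _ t _ hst
    simp only
    rw [hqeq s, hqeq t]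
    exact stmt13_aux1 _ _ hc0 hc1 hbc s t hst
  · intro t _
    rw [hqeq t]
    have hrw : ((1 - a) / (a * N)) *
        (Real.sqrt ((1 - a * (N + 1)) ^ 2 + a * N / (1 - a)) - (1 - a * (N + 1))) =
        (Real.sqrt ((1 - a * (N + 1)) ^ 2 + a * N / (1 - a)) - (1 - a * (N + 1))) /
          (a * N / (1 - a)) := by
      field_simp
    rw [hrw]
    exact stmt13_aux2 _ _ _ hb hc0 hd0 hcd hbc t
end
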